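/- arXiv:2304.04251 — 8 statements merged into one kernel-verified Lean document; each statement's English description precedes it below -/
import Mathlib

section
/- Let T be an associative trialgebra over a field K of characteristic zero equipped with a Rota–Baxter operator R of weight 0 on the trialgebra T. Define x⋆y = R(x)∗y − y∗R(x), where x∗y = x⊣y + x⊢y − x⊥y. Then (T,⋆) is a left-symmetric (pre-Lie) algebra, i.e. (x⋆y)⋆z − x⋆(y⋆z) = (y⋆x)⋆z − y⋆(x⋆z) for all x,y,z ∈ T. -/
variable {K T : Type*} [Field K] [CharZero K] [AddCommGroup T] [Module K T]

/-- An associative trialgebra structure: three bilinear products `l` (⊣), `r` (⊢), `m` (⊥)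
satisfying the eleven trialgebra axioms. -/
structure IsTrialgebra (l r m : T →ₗ[K] T →ₗ[K] T) : Prop where
  ax1 : ∀ x y z : T, l (l x y) z = l x (l y z)
  ax2 : ∀ x y z : T, l (l x y) z = l x (r y z)
  ax3 : ∀ x y z : T, l (r x y) z = r x (l y z)
  ax4 : ∀ x y z : T, r (l x y) z = r x (r y z)
  ax5 : ∀ x y z : T, r (r x y) z = r x (r y z)
  ax6 : ∀ x y z : T, l (l x y) z = l x (m y z)
  ax7 : ∀ x y z : T, l (m x y) z = m x (l y z)
  ax8 : ∀ x y z : T, m (l x y) z = m x (r y z)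
  ax9 : ∀ x y z : T, m (r x y) z = r x (m y z)
  ax10 : ∀ x y z : T, r (m x y) z = r x (r y z)
  ax11 : ∀ x y z : T, m (m x y) z = m x (m y z)

/-- The associated product x∗y = x⊣y + x⊢y − x⊥y. -/
def triStar (l r m : T →ₗ[K] T →ₗ[K] T) (x y : T) : T := l x y + r x y - m x y


/-- A Rota–Baxter operator of weight `lam` on the trialgebra: the Rota–Baxter identity holds
for each of the three products. -/
def IsRotaBaxter (l r m : T →ₗ[K] T →ₗ[K] T) (lam : K) (R : T →ₗ[K] T) : Prop :=
  ∀ x y : T,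
    l (R x) (R y) = R (l (R x) y + l x (R y) + lam • l x y) ∧
    r (R x) (R y) = R (r (R x) y + r x (R y) + lam • r x y) ∧
    m (R x) (R y) = R (m (R x) y + m x (R y) + lam • m x y)

/-- The product x⋆y = R(x)∗y − y∗R(x) associated to a Rota–Baxter operator of weight 0. -/
def preLieStar (l r m : T →ₗ[K] T →ₗ[K] T) (R : T →ₗ[K] T) (x y : T) : T :=
  triStar l r m (R x) y - triStar l r m y (R x)

section Aux
variable (l r m : T →ₗ[K] T →ₗ[K] T)

lemma triStar_sub_left (a b c : T) :
    triStar l r m (a - b) c = triStar l r m a c - triStar l r m b c := by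
  simp only [triStar, map_sub, LinearMap.sub_apply]; abel

lemma triStar_sub_right (a b c : T) :
    triStar l r m a (b - c) = triStar l r m a b - triStar l r m a c := by
  simp only [triStar, map_sub]; abel

lemma triStar_assoc (h : IsTrialgebra l r m) (a b c : T) :
    triStar l r m (triStar l r m a b) c = triStar l r m a (triStar l r m b c) := by
  have e26 : ∀ a b c : T, l a (r b c) = l a (m b c) := fun a b c =>
    (h.ax2 a b c).symm.trans (h.ax6 a b c)
  simp only [triStar, map_add, map_sub, LinearMap.add_apply, LinearMap.sub_apply,
    h.ax1, h.ax3, h.ax7, h.ax4, h.ax5, h.ax10, h.ax8, h.ax9, h.ax11, e26]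
  abel

lemma triStar_rb (R : T →ₗ[K] T) (hR : IsRotaBaxter l r m 0 R) (x y : T) :
    triStar l r m (R x) (R y)
      = R (triStar l r m (R x) y) + R (triStar l r m x (R y)) := by
  obtain ⟨h1, h2, h3⟩ := hR x y
  simp only [triStar, h1, h2, h3, zero_smul, add_zero, map_add, map_sub]
  abel

end Aux

/-- For a Rota–Baxter operator `R` of weight 0 on an associative trialgebra, the product
x⋆y = R(x)∗y − y∗R(x) is left-symmetric (pre-Lie). -/
theorem statement2 (l r m : T →ₗ[K] T →ₗ[K] T) (h : IsTrialgebra l r m)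
    (R : T →ₗ[K] T) (hR : IsRotaBaxter l r m 0 R) (x y z : T) :
    preLieStar l r m R (preLieStar l r m R x y) z -
        preLieStar l r m R x (preLieStar l r m R y z) =
      preLieStar l r m R (preLieStar l r m R y x) z -
        preLieStar l r m R y (preLieStar l r m R x z) := by
  have hQ : R (triStar l r m x (R y))
      = triStar l r m (R x) (R y) - R (triStar l r m (R x) y) := by
    rw [triStar_rb l r m R hR x y]; abel
  have hP' : R (triStar l r m (R y) x)
      = triStar l r m (R y) (R x) - R (triStar l r m y (R x)) := by
    rw [triStar_rb l r m R hR y x]; abel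
  simp only [preLieStar, map_sub, hQ, hP', triStar_sub_left, triStar_sub_right,
    triStar_assoc l r m h]
  abel
end

section
/- Let T = Trias₂³ be the 2-dimensional real algebra with basis e₁, e₂ and products e₂⊣e₂ = e₂; e₂⊢e₁ = e₁, e₂⊢e₂ = e₂; e₂⊥e₁ = e₁, e₂⊥e₂ = e₂ (all other products of basis vectors are zero). Then a linear map d : T → T is a derivation of T if and only if d(e₁) = α e₁ and d(e₂) = 0 for some α ∈ ℝ; in particular the space Der(T) of derivations has dimension 1. -/
/-- The space of derivations of an algebra with three bilinear products `l`, `r`, `m`: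
linear maps satisfying the Leibniz rule for each of the three products. -/
def DerSubmodule {E : Type*} [AddCommGroup E] [Module ℝ E]
    (l r m : E →ₗ[ℝ] E →ₗ[ℝ] E) : Submodule ℝ (E →ₗ[ℝ] E) where
  carrier := {d | ∀ x y : E,
    d (l x y) = l (d x) y + l x (d y) ∧
    d (r x y) = r (d x) y + r x (d y) ∧
    d (m x y) = m (d x) y + m x (d y)}
  add_mem' := by
    intro a b ha hb x y
    obtain ⟨h1, h2, h3⟩ := ha x y
    obtain ⟨g1, g2, g3⟩ := hb x y
    refine ⟨?_, ?_, ?_⟩ <;>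
      simp only [LinearMap.add_apply, h1, h2, h3, g1, g2, g3, map_add] <;> abel
  zero_mem' := by
    intro x y
    simp
  smul_mem' := by
    intro c a ha x y
    obtain ⟨h1, h2, h3⟩ := ha x y
    refine ⟨?_, ?_, ?_⟩ <;>
      simp only [LinearMap.smul_apply, h1, h2, h3, map_smul, smul_add]

/-- The centroid of an algebra with three bilinear products `l`, `r`, `m`:
linear maps ψ with ψ(x•y) = ψ(x)•y = x•ψ(y) for each of the three products. -/
def CentroidSubmodule {E : Type*} [AddCommGroup E] [Module ℝ E]
    (l r m : E →ₗ[ℝ] E →ₗ[ℝ] E) : Submodule ℝ (E →ₗ[ℝ] E) where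
  carrier := {ψ | ∀ x y : E,
    (ψ (l x y) = l (ψ x) y ∧ ψ (l x y) = l x (ψ y)) ∧
    (ψ (r x y) = r (ψ x) y ∧ ψ (r x y) = r x (ψ y)) ∧
    (ψ (m x y) = m (ψ x) y ∧ ψ (m x y) = m x (ψ y))}
  add_mem' := by
    intro a b ha hb x y
    obtain ⟨⟨h1, h1'⟩, ⟨h2, h2'⟩, ⟨h3, h3'⟩⟩ := ha x y
    obtain ⟨⟨g1, g1'⟩, ⟨g2, g2'⟩, ⟨g3, g3'⟩⟩ := hb x y
    refine ⟨⟨?_, ?_⟩, ⟨?_, ?_⟩, ⟨?_, ?_⟩⟩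
    · simp only [LinearMap.add_apply, map_add, h1, g1]
    · simp only [LinearMap.add_apply, map_add, h1', g1']
    · simp only [LinearMap.add_apply, map_add, h2, g2]
    · simp only [LinearMap.add_apply, map_add, h2', g2']
    · simp only [LinearMap.add_apply, map_add, h3, g3]
    · simp only [LinearMap.add_apply, map_add, h3', g3']
  zero_mem' := by
    intro x y
    simp
  smul_mem' := by
    intro c a ha x y
    obtain ⟨⟨h1, h1'⟩, ⟨h2, h2'⟩, ⟨h3, h3'⟩⟩ := ha x y
    refine ⟨⟨?_, ?_⟩, ⟨?_, ?_⟩, ⟨?_, ?_⟩⟩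
    · simp only [LinearMap.smul_apply, map_smul, h1]
    · simp only [LinearMap.smul_apply, map_smul, h1']
    · simp only [LinearMap.smul_apply, map_smul, h2]
    · simp only [LinearMap.smul_apply, map_smul, h2']
    · simp only [LinearMap.smul_apply, map_smul, h3]
    · simp only [LinearMap.smul_apply, map_smul, h3']

/-- The first basis vector of ℝ². -/
def e1 : Fin 2 → ℝ := ![1, 0]

/-- The second basis vector of ℝ². -/
def e2 : Fin 2 → ℝ := ![0, 1]

/-- Derivations of the 2-dimensional trialgebra Trias₂³ are exactly the maps
d(e₁) = α e₁, d(e₂) = 0; in particular Der(T) has dimension 1. -/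
theorem statement10 (l r m : (Fin 2 → ℝ) →ₗ[ℝ] (Fin 2 → ℝ) →ₗ[ℝ] (Fin 2 → ℝ))
    (hl11 : l e1 e1 = 0)
    (hl12 : l e1 e2 = 0)
    (hl21 : l e2 e1 = 0)
    (hl22 : l e2 e2 = e2)
    (hr11 : r e1 e1 = 0)
    (hr12 : r e1 e2 = 0)
    (hr21 : r e2 e1 = e1)
    (hr22 : r e2 e2 = e2)
    (hm11 : m e1 e1 = 0)
    (hm12 : m e1 e2 = 0)
    (hm21 : m e2 e1 = e1)
    (hm22 : m e2 e2 = e2) :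
    (∀ d : (Fin 2 → ℝ) →ₗ[ℝ] (Fin 2 → ℝ),
      d ∈ DerSubmodule l r m ↔ ∃ α : ℝ, d e1 = α • e1 ∧ d e2 = 0) ∧
    Module.finrank ℝ (DerSubmodule l r m) = 1 := by
  have decomp : ∀ v : Fin 2 → ℝ, v = v 0 • e1 + v 1 • e2 := by
    intro v; funext i; fin_cases i <;> simp [e1, e2]
  have e1ne : e1 ≠ 0 := by
    intro h
    have := congrFun h 0
    simp [e1] at this
  have key : ∀ d : (Fin 2 → ℝ) →ₗ[ℝ] (Fin 2 → ℝ),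
      d ∈ DerSubmodule l r m ↔ ∃ α : ℝ, d e1 = α • e1 ∧ d e2 = 0 := by
    intro d
    constructor
    · intro hd
      obtain ⟨a, b, hde1⟩ : ∃ a b, d e1 = a • e1 + b • e2 := ⟨_, _, decomp _⟩
      obtain ⟨c, f, hde2⟩ : ∃ c f, d e2 = c • e1 + f • e2 := ⟨_, _, decomp _⟩
      obtain ⟨hL22, hR22, hM22⟩ := hd e2 e2
      obtain ⟨hL12, hR12, hM12⟩ := hd e1 e2
      rw [hl22, hde2] at hL22
      simp only [map_add, map_smul, LinearMap.add_apply, LinearMap.smul_apply,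
        hl11, hl12, hl21, hl22] at hL22
      have hc : c = 0 := by
        have := congrFun hL22 0
        simpa [e1, e2] using this
      have hf : f = 0 := by
        have := congrFun hL22 1
        simp [e1, e2] at this
        linarith
      rw [hl12, hde1, hde2] at hL12
      simp only [map_add, map_smul, LinearMap.add_apply, LinearMap.smul_apply,
        hl11, hl12, hl21, hl22, map_zero] at hL12
      have hb : b = 0 := by
        have := congrFun hL12.symm 1
        simpa [e1, e2, hc, hf] using this
      refine ⟨a, ?_, ?_⟩
      · rw [hde1, hb]; simp
      · rw [hde2, hc, hf]; simp
    · rintro ⟨α, h1, h2⟩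
      intro x y
      rw [decomp x, decomp y]
      refine ⟨?_, ?_, ?_⟩ <;>
        simp only [map_add, map_smul, LinearMap.add_apply, LinearMap.smul_apply,
          hl11, hl12, hl21, hl22, hr11, hr12, hr21, hr22,
          hm11, hm12, hm21, hm22, h1, h2, smul_zero, add_zero, zero_add,
          smul_add, smul_smul] <;> module
  refine ⟨key, ?_⟩
  set d₀ : (Fin 2 → ℝ) →ₗ[ℝ] (Fin 2 → ℝ) :=
    (LinearMap.proj 0 : (Fin 2 → ℝ) →ₗ[ℝ] ℝ).smulRight e1 with hd₀
  have hd₀e1 : d₀ e1 = e1 := by simp [hd₀, e1]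
  have hd₀e2 : d₀ e2 = 0 := by simp [hd₀, e2]
  have hspan : DerSubmodule l r m = Submodule.span ℝ {d₀} := by
    ext d
    rw [key, Submodule.mem_span_singleton]
    constructor
    · rintro ⟨α, h1, h2⟩
      refine ⟨α, ?_⟩
      apply LinearMap.ext
      intro v
      rw [decomp v]
      simp [map_add, map_smul, h1, h2, hd₀e1, hd₀e2, smul_smul]
    · rintro ⟨α, rfl⟩
      exact ⟨α, by simp [hd₀e1], by simp [hd₀e2]⟩
  rw [hspan]
  rw [finrank_span_singleton]
  intro h
  apply e1ne
  rw [← hd₀e1, h]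
  simp
end

section
/- Let T = Trias₂³ be the 2-dimensional real algebra with basis e₁, e₂ and products e₂⊣e₂ = e₂; e₂⊢e₁ = e₁, e₂⊢e₂ = e₂; e₂⊥e₁ = e₁, e₂⊥e₂ = e₂ (all other products of basis vectors are zero). Then a linear map ψ : T → T belongs to the centroid Γ(T) if and only if ψ is a scalar multiple of the identity; in particular Γ(T) has dimension 1. -/
/-- The centroid of the 2-dimensional trialgebra Trias₂³ consists exactly of the scalar
multiples of the identity; in particular Γ(T) has dimension 1. -/
theorem statement11 (l r m : (Fin 2 → ℝ) →ₗ[ℝ] (Fin 2 → ℝ) →ₗ[ℝ] (Fin 2 → ℝ))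
    (hl11 : l e1 e1 = 0)
    (hl12 : l e1 e2 = 0)
    (hl21 : l e2 e1 = 0)
    (hl22 : l e2 e2 = e2)
    (hr11 : r e1 e1 = 0)
    (hr12 : r e1 e2 = 0)
    (hr21 : r e2 e1 = e1)
    (hr22 : r e2 e2 = e2)
    (hm11 : m e1 e1 = 0)
    (hm12 : m e1 e2 = 0)
    (hm21 : m e2 e1 = e1)
    (hm22 : m e2 e2 = e2) :
    (∀ ψ : (Fin 2 → ℝ) →ₗ[ℝ] (Fin 2 → ℝ),
      ψ ∈ CentroidSubmodule l r m ↔ ∃ c : ℝ, ψ = c • LinearMap.id) ∧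
    Module.finrank ℝ (CentroidSubmodule l r m) = 1 := by

  have decomp : ∀ x : Fin 2 → ℝ, x = x 0 • e1 + x 1 • e2 := by
    intro x; funext i; fin_cases i <;> simp [e1, e2]
  have keyl : ∀ v : Fin 2 → ℝ, l v e2 = v 1 • e2 := by
    intro v
    conv_lhs => rw [decomp v]
    simp [map_add, map_smul, hl12, hl22]
  have keyr : ∀ v : Fin 2 → ℝ, r v e1 = v 1 • e1 := by
    intro v
    conv_lhs => rw [decomp v]
    simp [map_add, map_smul, hr11, hr21]
  have main : ∀ ψ : (Fin 2 → ℝ) →ₗ[ℝ] (Fin 2 → ℝ),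
      ψ ∈ CentroidSubmodule l r m ↔ ∃ c : ℝ, ψ = c • LinearMap.id := by
    intro ψ
    constructor
    · intro hψ
      set d := (ψ e2) 1 with hdd
      refine ⟨d, ?_⟩
      have hd2 : ψ e2 = d • e2 := by
        have h := (hψ e2 e2).1.1
        rw [hl22, keyl] at h
        exact h
      have hd1 : ψ e1 = d • e1 := by
        have h := (hψ e2 e1).2.1.1
        rw [hr21, keyr] at h
        exact h
      apply LinearMap.ext
      intro x
      have hx : ψ x = x 0 • ψ e1 + x 1 • ψ e2 := by
        conv_lhs => rw [decomp x]
        simp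
      rw [hx, hd1, hd2]
      simp only [LinearMap.smul_apply, LinearMap.id_apply]
      conv_rhs => rw [decomp x]
      module
    · rintro ⟨c, rfl⟩
      intro x y
      refine ⟨⟨?_, ?_⟩, ⟨?_, ?_⟩, ⟨?_, ?_⟩⟩ <;>
        simp [map_smul]
  refine ⟨main, ?_⟩
  have heq : CentroidSubmodule l r m
      = Submodule.span ℝ {(LinearMap.id : (Fin 2 → ℝ) →ₗ[ℝ] (Fin 2 → ℝ))} := by
    ext ψ
    rw [main ψ, Submodule.mem_span_singleton]
    constructor
    · rintro ⟨c, rfl⟩; exact ⟨c, rfl⟩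
    · rintro ⟨c, rfl⟩; exact ⟨c, rfl⟩
  rw [heq, finrank_span_singleton]
  intro h
  have h1 := congrFun (LinearMap.congr_fun h e1) 0
  simp [e1] at h1
end

section
/- Let T = Trias₂⁶ be the 2-dimensional real algebra with basis e₁, e₂ and products e₁⊣e₁ = e₁, e₂⊣e₁ = e₂; e₁⊢e₁ = e₁; e₁⊥e₁ = e₁ (all other products of basis vectors are zero). Then a linear map d : T → T is a derivation of T if and only if d(e₁) = 0 and d(e₂) = α e₂ for some α ∈ ℝ; in particular the space Der(T) of derivations has dimension 1. -/
/-- Derivations of the 2-dimensional trialgebra Trias₂⁶ are exactly the maps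
d(e₁) = 0, d(e₂) = α e₂; in particular Der(T) has dimension 1. -/
theorem statement12 (l r m : (Fin 2 → ℝ) →ₗ[ℝ] (Fin 2 → ℝ) →ₗ[ℝ] (Fin 2 → ℝ))
    (hl11 : l e1 e1 = e1)
    (hl12 : l e1 e2 = 0)
    (hl21 : l e2 e1 = e2)
    (hl22 : l e2 e2 = 0)
    (hr11 : r e1 e1 = e1)
    (hr12 : r e1 e2 = 0)
    (hr21 : r e2 e1 = 0)
    (hr22 : r e2 e2 = 0)
    (hm11 : m e1 e1 = e1)
    (hm12 : m e1 e2 = 0)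
    (hm21 : m e2 e1 = 0)
    (hm22 : m e2 e2 = 0) :
    (∀ d : (Fin 2 → ℝ) →ₗ[ℝ] (Fin 2 → ℝ),
      d ∈ DerSubmodule l r m ↔ ∃ α : ℝ, d e1 = 0 ∧ d e2 = α • e2) ∧
    Module.finrank ℝ (DerSubmodule l r m) = 1 := by
  -- decomposition of any vector
  have hx : ∀ v : Fin 2 → ℝ, v = v 0 • e1 + v 1 • e2 := by
    intro v; funext i; fin_cases i <;> simp [e1, e2]
  -- closed formulas for the products
  have hL : ∀ x y : Fin 2 → ℝ, l x y = y 0 • x := by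
    intro x y
    conv_lhs => rw [hx x, hx y]
    simp only [map_add, map_smul, LinearMap.add_apply, LinearMap.smul_apply,
      hl11, hl12, hl21, hl22, smul_zero, add_zero, smul_smul]
    conv_rhs => rw [hx x]
  have hR : ∀ x y : Fin 2 → ℝ, r x y = (x 0 * y 0) • e1 := by
    intro x y
    conv_lhs => rw [hx x, hx y]
    simp only [map_add, map_smul, LinearMap.add_apply, LinearMap.smul_apply,
      hr11, hr12, hr21, hr22, smul_zero, add_zero, smul_smul]
    try ring_nf
  have hM : ∀ x y : Fin 2 → ℝ, m x y = (x 0 * y 0) • e1 := by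
    intro x y
    conv_lhs => rw [hx x, hx y]
    simp only [map_add, map_smul, LinearMap.add_apply, LinearMap.smul_apply,
      hm11, hm12, hm21, hm22, smul_zero, add_zero, smul_smul]
    try ring_nf
  have he10 : e1 0 = 1 := by simp [e1]
  have he11 : e1 1 = 0 := by simp [e1]
  have he20 : e2 0 = 0 := by simp [e2]
  have he21 : e2 1 = 1 := by simp [e2]
  have key : ∀ d : (Fin 2 → ℝ) →ₗ[ℝ] (Fin 2 → ℝ),
      d ∈ DerSubmodule l r m ↔ ∃ α : ℝ, d e1 = 0 ∧ d e2 = α • e2 := by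
    intro d
    constructor
    · intro hd
      obtain ⟨h1, h2, _⟩ := hd e1 e1
      obtain ⟨h3, _, _⟩ := hd e2 e2
      rw [hL, he10, one_smul, hL, hL, he10, one_smul] at h1
      have ha : d e1 0 = 0 := by
        have := congrFun h1 0
        simp only [Pi.add_apply, Pi.smul_apply, he10, smul_eq_mul, mul_one] at this
        linarith
      have hde1 : d e1 = 0 := by
        rw [hR, hR, hR] at h2
        simpa [he10, ha] using h2
      rw [hL, hL, hL] at h3
      simp only [he20, zero_smul, map_zero, zero_add] at h3
      have hb : d e2 0 = 0 := by
        have := congrFun h3 1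
        simp only [Pi.smul_apply, he21, smul_eq_mul, mul_one, Pi.zero_apply] at this
        linarith
      refine ⟨d e2 1, hde1, ?_⟩
      conv_lhs => rw [hx (d e2)]
      rw [hb, zero_smul, zero_add]
    · rintro ⟨α, h1, h2⟩
      have hd : ∀ v : Fin 2 → ℝ, d v = (α * v 1) • e2 := by
        intro v
        conv_lhs => rw [hx v]
        rw [map_add, map_smul, map_smul, h1, h2, smul_zero, zero_add, smul_smul,
          mul_comm]
      have hd0 : ∀ v : Fin 2 → ℝ, d v 0 = 0 := by
        intro v; rw [hd]; simp [he20]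
      intro x y
      refine ⟨?_, ?_, ?_⟩
      · rw [hL, hL, hL, map_smul, hd0, zero_smul, add_zero]
      · simp [hR, map_smul, h1, hd0]
      · simp [hM, map_smul, h1, hd0]
  refine ⟨key, ?_⟩
  set d0 : (Fin 2 → ℝ) →ₗ[ℝ] (Fin 2 → ℝ) :=
    (LinearMap.proj 1 : (Fin 2 → ℝ) →ₗ[ℝ] ℝ).smulRight e2 with hd0def
  have hd0app : ∀ v, d0 v = v 1 • e2 := fun v => rfl
  have hspan : DerSubmodule l r m = Submodule.span ℝ {d0} := by
    ext d
    rw [key d, Submodule.mem_span_singleton]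
    constructor
    · rintro ⟨α, h1, h2⟩
      refine ⟨α, ?_⟩
      apply LinearMap.ext; intro v
      conv_rhs => rw [hx v]
      rw [map_add, map_smul, map_smul, h1, h2, smul_zero, zero_add]
      simp [hd0app, he21, smul_smul, mul_comm]
    · rintro ⟨a, ha⟩
      refine ⟨a, ?_⟩
      rw [← ha]
      constructor
      · simp [hd0app, he11]
      · simp [hd0app, he21, smul_smul]
  rw [hspan]
  rw [finrank_span_singleton]
  intro h
  have := congrFun (congrArg (fun f => (f : (Fin 2 → ℝ) →ₗ[ℝ] (Fin 2 → ℝ)) e2) h) 1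
  simp [hd0app, he21, e2] at this
end

section
/- Let T = Trias₂⁶ be the 2-dimensional real algebra with basis e₁, e₂ and products e₁⊣e₁ = e₁, e₂⊣e₁ = e₂; e₁⊢e₁ = e₁; e₁⊥e₁ = e₁ (all other products of basis vectors are zero). Then a linear map ψ : T → T belongs to the centroid Γ(T) if and only if ψ is a scalar multiple of the identity; in particular Γ(T) has dimension 1. -/
/-- The centroid of the 2-dimensional trialgebra Trias₂⁶ consists exactly of the scalar
multiples of the identity; in particular Γ(T) has dimension 1. -/
theorem statement13 (l r m : (Fin 2 → ℝ) →ₗ[ℝ] (Fin 2 → ℝ) →ₗ[ℝ] (Fin 2 → ℝ))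
    (hl11 : l e1 e1 = e1)
    (hl12 : l e1 e2 = 0)
    (hl21 : l e2 e1 = e2)
    (hl22 : l e2 e2 = 0)
    (hr11 : r e1 e1 = e1)
    (hr12 : r e1 e2 = 0)
    (hr21 : r e2 e1 = 0)
    (hr22 : r e2 e2 = 0)
    (hm11 : m e1 e1 = e1)
    (hm12 : m e1 e2 = 0)
    (hm21 : m e2 e1 = 0)
    (hm22 : m e2 e2 = 0) :
    (∀ ψ : (Fin 2 → ℝ) →ₗ[ℝ] (Fin 2 → ℝ),
      ψ ∈ CentroidSubmodule l r m ↔ ∃ c : ℝ, ψ = c • LinearMap.id) ∧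
    Module.finrank ℝ (CentroidSubmodule l r m) = 1 := by
  have hdecomp : ∀ v : Fin 2 → ℝ, v = v 0 • e1 + v 1 • e2 := by
    intro v
    funext i
    fin_cases i <;> simp [e1, e2]
  have key : ∀ ψ : (Fin 2 → ℝ) →ₗ[ℝ] (Fin 2 → ℝ),
      ψ ∈ CentroidSubmodule l r m ↔ ∃ c : ℝ, ψ = c • LinearMap.id := by
    intro ψ
    constructor
    · intro hψ
      obtain ⟨⟨_, _⟩, ⟨hr1, _⟩, _⟩ := hψ e1 e1
      obtain ⟨⟨_, hl2'⟩, _, _⟩ := hψ e2 e1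
      have he1 : ψ e1 = (ψ e1 0) • e1 := by
        have h := hr1
        rw [hr11] at h
        conv at h => rhs; rw [hdecomp (ψ e1)]
        rw [map_add, map_smul, map_smul, LinearMap.add_apply, LinearMap.smul_apply,
          LinearMap.smul_apply, hr11, hr21, smul_zero, add_zero] at h
        exact h
      have he2 : ψ e2 = (ψ e1 0) • e2 := by
        have h := hl2'
        rw [hl21, he1, map_smul, hl21] at h
        exact h
      refine ⟨ψ e1 0, ?_⟩
      apply LinearMap.ext
      intro v
      conv_lhs => rw [hdecomp v, map_add, map_smul, map_smul, he1, he2]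
      simp only [LinearMap.smul_apply, LinearMap.id_apply]
      conv_rhs => rw [hdecomp v]
      module
    · rintro ⟨c, rfl⟩ x y
      simp only [LinearMap.smul_apply, LinearMap.id_apply, map_smul, LinearMap.smul_apply]
      tauto
  refine ⟨key, ?_⟩
  have hspan : CentroidSubmodule l r m = Submodule.span ℝ {(LinearMap.id : (Fin 2 → ℝ) →ₗ[ℝ] (Fin 2 → ℝ))} := by
    ext ψ
    rw [key ψ, Submodule.mem_span_singleton]
    constructor
    · rintro ⟨c, rfl⟩; exact ⟨c, rfl⟩
    · rintro ⟨c, rfl⟩; exact ⟨c, rfl⟩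
  rw [hspan]
  apply finrank_span_singleton
  intro h
  have : (LinearMap.id : (Fin 2 → ℝ) →ₗ[ℝ] (Fin 2 → ℝ)) e1 = 0 := by rw [h]; rfl
  simp only [LinearMap.id_apply] at this
  have := congrFun this 0
  simp [e1] at this
end

section
/- Let T = Trias₂⁷ be the 2-dimensional real algebra with basis e₁, e₂ and products e₁⊣e₁ = e₁, e₂⊣e₁ = e₂; e₁⊢e₁ = e₁, e₁⊢e₂ = e₂; e₁⊥e₁ = e₁, e₁⊥e₂ = e₂ (all other products of basis vectors are zero). Then a linear map ψ : T → T belongs to the centroid Γ(T) if and only if ψ is a scalar multiple of the identity; in particular Γ(T) has dimension 1. -/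
/-! Left multiplication by `e₁` for `⊣` is the projection onto `ℝ e₁`, so
`ψ e₁ = ψ (e₁ ⊣ e₁) = e₁ ⊣ ψ e₁` is a multiple `a e₁`; then `ψ e₂ = ψ (e₂ ⊣ e₁) = e₂ ⊣ ψ e₁ = a e₂`.
Conversely, scalars lie in every centroid. -/

theorem smul_id_mem_centroidSubmodule {E : Type*} [AddCommGroup E] [Module ℝ E]
    (l r m : E →ₗ[ℝ] E →ₗ[ℝ] E) (c : ℝ) : c • LinearMap.id ∈ CentroidSubmodule l r m := by
  intro x y
  simp only [LinearMap.smul_apply, LinearMap.id_apply, map_smul, and_self]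

theorem eq_smul_e1_add_smul_e2 (x : Fin 2 → ℝ) : x = x 0 • e1 + x 1 • e2 := by
  funext i
  fin_cases i <;> simp [e1, e2]

theorem LinearMap.ext_e1_e2 {M : Type*} [AddCommGroup M] [Module ℝ M]
    {f g : (Fin 2 → ℝ) →ₗ[ℝ] M} (h1 : f e1 = g e1) (h2 : f e2 = g e2) : f = g :=
  LinearMap.ext fun x => by
    rw [eq_smul_e1_add_smul_e2 x, map_add, map_add, map_smul, map_smul, map_smul, map_smul,
      h1, h2]

theorem apply_e1_eq_smul_e1 (l : (Fin 2 → ℝ) →ₗ[ℝ] (Fin 2 → ℝ) →ₗ[ℝ] (Fin 2 → ℝ))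
    (hl11 : l e1 e1 = e1) (hl12 : l e1 e2 = 0) (x : Fin 2 → ℝ) : l e1 x = x 0 • e1 := by
  rw [eq_smul_e1_add_smul_e2 x, map_add, map_smul, map_smul, hl11, hl12, smul_zero, add_zero]
  simp [e1, e2]

theorem eq_smul_id_of_map_apply_eq_apply_map
    (l : (Fin 2 → ℝ) →ₗ[ℝ] (Fin 2 → ℝ) →ₗ[ℝ] (Fin 2 → ℝ))
    (hl11 : l e1 e1 = e1) (hl12 : l e1 e2 = 0) (hl21 : l e2 e1 = e2)
    {ψ : (Fin 2 → ℝ) →ₗ[ℝ] (Fin 2 → ℝ)} (hψ : ∀ x y, ψ (l x y) = l x (ψ y)) :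
    ψ = ψ e1 0 • LinearMap.id := by
  have he1 : ψ e1 = ψ e1 0 • e1 :=
    calc ψ e1 = ψ (l e1 e1) := by rw [hl11]
      _ = l e1 (ψ e1) := hψ e1 e1
      _ = ψ e1 0 • e1 := apply_e1_eq_smul_e1 l hl11 hl12 _
  have he2 : ψ e2 = ψ e1 0 • e2 :=
    calc ψ e2 = ψ (l e2 e1) := by rw [hl21]
      _ = l e2 (ψ e1) := hψ e2 e1
      _ = l e2 (ψ e1 0 • e1) := congrArg _ he1
      _ = ψ e1 0 • e2 := by rw [map_smul, hl21]
  exact LinearMap.ext_e1_e2 he1 he2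

theorem centroidSubmodule_eq_span_id
    (l r m : (Fin 2 → ℝ) →ₗ[ℝ] (Fin 2 → ℝ) →ₗ[ℝ] (Fin 2 → ℝ))
    (hl11 : l e1 e1 = e1) (hl12 : l e1 e2 = 0) (hl21 : l e2 e1 = e2) :
    CentroidSubmodule l r m = ℝ ∙ LinearMap.id := by
  refine le_antisymm (fun ψ hψ => ?_) ((Submodule.span_singleton_le_iff_mem _ _).2 ?_)
  · rw [eq_smul_id_of_map_apply_eq_apply_map l hl11 hl12 hl21 fun x y => (hψ x y).1.2]
    exact Submodule.smul_mem _ _ (Submodule.mem_span_singleton_self _)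
  · simpa using smul_id_mem_centroidSubmodule l r m 1

theorem statement14_general (l r m : (Fin 2 → ℝ) →ₗ[ℝ] (Fin 2 → ℝ) →ₗ[ℝ] (Fin 2 → ℝ))
    (hl11 : l e1 e1 = e1)
    (hl12 : l e1 e2 = 0)
    (hl21 : l e2 e1 = e2) :
    (∀ ψ : (Fin 2 → ℝ) →ₗ[ℝ] (Fin 2 → ℝ),
      ψ ∈ CentroidSubmodule l r m ↔ ∃ c : ℝ, ψ = c • LinearMap.id) ∧
    Module.finrank ℝ (CentroidSubmodule l r m) = 1 := by
  rw [centroidSubmodule_eq_span_id l r m hl11 hl12 hl21]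
  refine ⟨fun ψ => ?_, finrank_span_singleton one_ne_zero⟩
  rw [Submodule.mem_span_singleton]
  exact exists_congr fun c => eq_comm

/-- The centroid of the 2-dimensional trialgebra Trias₂⁷ consists exactly of the scalar
multiples of the identity; in particular Γ(T) has dimension 1. -/
theorem statement14 (l r m : (Fin 2 → ℝ) →ₗ[ℝ] (Fin 2 → ℝ) →ₗ[ℝ] (Fin 2 → ℝ))
    (hl11 : l e1 e1 = e1)
    (hl12 : l e1 e2 = 0)
    (hl21 : l e2 e1 = e2)
    (hl22 : l e2 e2 = 0)
    (hr11 : r e1 e1 = e1)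
    (hr12 : r e1 e2 = e2)
    (hr21 : r e2 e1 = 0)
    (hr22 : r e2 e2 = 0)
    (hm11 : m e1 e1 = e1)
    (hm12 : m e1 e2 = e2)
    (hm21 : m e2 e1 = 0)
    (hm22 : m e2 e2 = 0) :
    (∀ ψ : (Fin 2 → ℝ) →ₗ[ℝ] (Fin 2 → ℝ),
      ψ ∈ CentroidSubmodule l r m ↔ ∃ c : ℝ, ψ = c • LinearMap.id) ∧
    Module.finrank ℝ (CentroidSubmodule l r m) = 1 :=
  statement14_general l r m hl11 hl12 hl21
end

section
/- Let a, b ∈ ℝ with a ≠ 0 and let T = Trias₂⁸ be the 2-dimensional real algebra with basis e₁, e₂ and products e₁⊣e₁ = a e₁, e₂⊣e₁ = a e₂; e₁⊢e₁ = a e₁, e₁⊢e₂ = a e₂; e₁⊥e₁ = a e₁ + b e₂ (all other products of basis vectors are zero). Then a linear map ψ : T → T belongs to the centroid Γ(T) if and only if ψ is a scalar multiple of the identity; in particular Γ(T) has dimension 1. -/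
lemma e1_0 : e1 0 = 1 := rfl
lemma e1_1 : e1 1 = 0 := rfl
lemma e2_0 : e2 0 = 0 := rfl
lemma e2_1 : e2 1 = 1 := rfl

lemma decomp (v : Fin 2 → ℝ) : v = v 0 • e1 + v 1 • e2 := by
  funext i; fin_cases i <;> simp [e1, e2]

/-- The centroid of the 2-dimensional trialgebra Trias₂⁸ (with parameters a ≠ 0, b)
consists exactly of the scalar multiples of the identity; in particular Γ(T) has
dimension 1. -/
theorem statement15 (a b : ℝ) (ha : a ≠ 0) (l r m : (Fin 2 → ℝ) →ₗ[ℝ] (Fin 2 → ℝ) →ₗ[ℝ] (Fin 2 → ℝ))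
    (hl11 : l e1 e1 = a • e1)
    (hl12 : l e1 e2 = 0)
    (hl21 : l e2 e1 = a • e2)
    (hl22 : l e2 e2 = 0)
    (hr11 : r e1 e1 = a • e1)
    (hr12 : r e1 e2 = a • e2)
    (hr21 : r e2 e1 = 0)
    (hr22 : r e2 e2 = 0)
    (hm11 : m e1 e1 = a • e1 + b • e2)
    (hm12 : m e1 e2 = 0)
    (hm21 : m e2 e1 = 0)
    (hm22 : m e2 e2 = 0) :
    (∀ ψ : (Fin 2 → ℝ) →ₗ[ℝ] (Fin 2 → ℝ),
      ψ ∈ CentroidSubmodule l r m ↔ ∃ c : ℝ, ψ = c • LinearMap.id) ∧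
    Module.finrank ℝ (CentroidSubmodule l r m) = 1 := by
  have key : ∀ ψ : (Fin 2 → ℝ) →ₗ[ℝ] (Fin 2 → ℝ),
      ψ ∈ CentroidSubmodule l r m ↔ ∃ c : ℝ, ψ = c • LinearMap.id := by
    intro ψ
    constructor
    · intro hψ
      have h1 := (hψ e1 e1).1.2
      have h2 := (hψ e2 e1).1.2
      rw [hl11, map_smul] at h1
      rw [hl21, map_smul] at h2
      conv at h1 => rhs; rw [decomp (ψ e1)]
      conv at h2 => rhs; rw [decomp (ψ e1)]
      rw [map_add, map_smul, map_smul, hl11, hl12] at h1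
      rw [map_add, map_smul, map_smul, hl21, hl22] at h2
      have c11 := congrFun h1 1
      have c20 := congrFun h2 0
      have c21 := congrFun h2 1
      simp only [Pi.smul_apply, Pi.add_apply, Pi.zero_apply, smul_eq_mul, smul_zero,
        e1_0, e1_1, e2_0, e2_1, mul_zero, mul_one, add_zero, zero_add] at c11 c20 c21
      have k11 : ψ e1 1 = 0 := (mul_eq_zero.mp c11).resolve_left ha
      have k20 : ψ e2 0 = 0 := (mul_eq_zero.mp c20).resolve_left ha
      have k21 : ψ e2 1 = ψ e1 0 := mul_left_cancel₀ ha (c21.trans (mul_comm _ _))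
      refine ⟨ψ e1 0, ?_⟩
      apply LinearMap.ext; intro x
      conv_lhs => rw [decomp x]
      rw [map_add, map_smul, map_smul, decomp (ψ e1), decomp (ψ e2), k11, k20, k21]
      simp only [LinearMap.smul_apply, LinearMap.id_apply, zero_smul, add_zero, zero_add,
        smul_add, smul_smul]
      conv_rhs => rw [decomp x]
      simp [smul_smul, mul_comm, e1_0]
    · rintro ⟨c, rfl⟩
      intro x y
      refine ⟨⟨?_, ?_⟩, ⟨?_, ?_⟩, ⟨?_, ?_⟩⟩ <;>
        simp [map_smul]
  refine ⟨key, ?_⟩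
  have hid : (LinearMap.id : (Fin 2 → ℝ) →ₗ[ℝ] (Fin 2 → ℝ)) ≠ 0 := by
    intro h
    have h0 := congrFun (LinearMap.congr_fun h e1) 0
    simp [e1] at h0
  have hspan : CentroidSubmodule l r m = Submodule.span ℝ {LinearMap.id} := by
    ext ψ
    rw [key, Submodule.mem_span_singleton]
    exact exists_congr fun c => eq_comm
  rw [hspan, finrank_span_singleton hid]
end

section
/- Let a, b ∈ ℝ with a ≠ 0 and let T = Trias₂¹ be the 2-dimensional real algebra with basis e₁, e₂ and products e₁⊣e₂ = a e₁, e₂⊣e₂ = a e₂; e₂⊢e₁ = a e₁, e₂⊢e₂ = a e₂; e₁⊥e₁ = b e₁, e₁⊥e₂ = b e₁ + a e₂ (all other products of basis vectors are zero). Then a linear map ψ : T → T belongs to the centroid Γ(T) if and only if ψ is a scalar multiple of the identity; in particular Γ(T) has dimension 1. -/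
/-- The centroid of the 2-dimensional trialgebra Trias₂¹ (with parameters a ≠ 0, b)
consists exactly of the scalar multiples of the identity; in particular Γ(T) has
dimension 1. -/
theorem statement16 (a b : ℝ) (ha : a ≠ 0) (l r m : (Fin 2 → ℝ) →ₗ[ℝ] (Fin 2 → ℝ) →ₗ[ℝ] (Fin 2 → ℝ))
    (hl11 : l e1 e1 = 0)
    (hl12 : l e1 e2 = a • e1)
    (hl21 : l e2 e1 = 0)
    (hl22 : l e2 e2 = a • e2)
    (hr11 : r e1 e1 = 0)
    (hr12 : r e1 e2 = 0)
    (hr21 : r e2 e1 = a • e1)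
    (hr22 : r e2 e2 = a • e2)
    (hm11 : m e1 e1 = b • e1)
    (hm12 : m e1 e2 = b • e1 + a • e2)
    (hm21 : m e2 e1 = 0)
    (hm22 : m e2 e2 = 0) :
    (∀ ψ : (Fin 2 → ℝ) →ₗ[ℝ] (Fin 2 → ℝ),
      ψ ∈ CentroidSubmodule l r m ↔ ∃ c : ℝ, ψ = c • LinearMap.id) ∧
    Module.finrank ℝ (CentroidSubmodule l r m) = 1 := by

  have hdecomp : ∀ v : Fin 2 → ℝ, v = v 0 • e1 + v 1 • e2 := by
    intro v
    funext i
    fin_cases i <;> simp [e1, e2]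
  have key : ∀ ψ : (Fin 2 → ℝ) →ₗ[ℝ] (Fin 2 → ℝ),
      ψ ∈ CentroidSubmodule l r m ↔ ∃ c : ℝ, ψ = c • LinearMap.id := by
    intro ψ
    constructor
    · intro hψ
      set c : ℝ := (ψ e2) 1 with hc
      set s : ℝ := (ψ e2) 0 with hs
      have hψ2 : ψ e2 = s • e1 + c • e2 := hdecomp (ψ e2)
      obtain ⟨⟨_, g22⟩, _, _⟩ := hψ e2 e2
      obtain ⟨⟨_, g12⟩, _, _⟩ := hψ e1 e2
      have rhs22 : l e2 (ψ e2) = a • (c • e2) := by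
        rw [hψ2, map_add, map_smul, map_smul, hl21, hl22, smul_zero, zero_add,
          smul_comm]
      have rhs12 : l e1 (ψ e2) = a • (c • e1) := by
        rw [hψ2, map_add, map_smul, map_smul, hl11, hl12, smul_zero, zero_add,
          smul_comm]
      rw [hl22, map_smul, rhs22] at g22
      rw [hl12, map_smul, rhs12] at g12
      have hψe2 : ψ e2 = c • e2 := smul_right_injective _ ha g22
      have hψe1 : ψ e1 = c • e1 := smul_right_injective _ ha g12
      refine ⟨c, LinearMap.ext fun v => ?_⟩
      have hv := hdecomp v
      rw [LinearMap.smul_apply, LinearMap.id_apply]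
      conv_lhs => rw [hv]
      rw [map_add, map_smul, map_smul, hψe1, hψe2]
      conv_rhs => rw [hv]
      rw [smul_add, smul_comm, smul_comm c (v 1)]
    · rintro ⟨c, rfl⟩ x y
      refine ⟨⟨?_, ?_⟩, ⟨?_, ?_⟩, ⟨?_, ?_⟩⟩ <;>
        simp [map_smul]
  refine ⟨key, ?_⟩
  have hspan : CentroidSubmodule l r m = Submodule.span ℝ {(LinearMap.id : (Fin 2 → ℝ) →ₗ[ℝ] (Fin 2 → ℝ))} := by
    ext ψ
    rw [key ψ, Submodule.mem_span_singleton]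
    constructor
    · rintro ⟨c, rfl⟩; exact ⟨c, rfl⟩
    · rintro ⟨c, rfl⟩; exact ⟨c, rfl⟩
  rw [hspan]
  apply finrank_span_singleton
  intro h
  have h1 := LinearMap.congr_fun h e1
  have h2 := congr_fun h1 0
  simp [e1] at h2
end
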